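/- arXiv:2408.00484 — 4 statements merged into one kernel-verified Lean document; each statement's English description precedes it below -/
import Mathlib

section
/- For n = k²−k+1 and k ≥ 3, the quantity λ_3 = k·C(n−k−3, k−3) − (k−3)·C(n−k−2, k−3) equals ((2k²−3k−3)/(k²−3k+2))·C(n−k−3, k−3) and is positive for k ≥ 4 (and nonnegative for k = 3). -/
/-!
With `m = n - k - 3 = k² - 2k - 2` and `r = k - 3`, the two binomial coefficients in `λ₃` are
related by `(m + 1 - r) C(m + 1, r) = (m + 1) C(m, r)`, and `m + 1 - r = k² - 3k + 2`.
Multiplying `λ₃` by this factor therefore leaves a polynomial multiple of `C(m, r)`, namely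
`(k(k² - 3k + 2) - (k - 3)(k² - 2k - 1)) C(m, r) = (2k² - 3k - 3) C(m, r)`; both quadratic
factors are positive for `k ≥ 3`, and so is `C(m, r)` since `r ≤ m`.
-/

section

variable {R : Type*} [CommRing R] {m r : ℕ}

theorem Nat.cast_choose_succ_mul_sub (hr : r ≤ m + 1) :
    ((m + 1).choose r : R) * ((m : R) + 1 - r) = ((m : R) + 1) * m.choose r := by
  have h := congrArg (Nat.cast : ℕ → R) (Nat.choose_mul_succ_eq m r)
  push_cast [hr] at h
  linear_combination -h

theorem Nat.succ_sub_mul_sub_choose_succ (hr : r ≤ m + 1) (a b : R) :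
    ((m : R) + 1 - r) * (a * m.choose r - b * (m + 1).choose r)
      = (a * ((m : R) + 1 - r) - b * ((m : R) + 1)) * m.choose r := by
  linear_combination (-b) * Nat.cast_choose_succ_mul_sub (R := R) hr

end

theorem stmt_10 (k : ℕ) (hk : 3 ≤ k) :
    let n := k ^ 2 - k + 1
    let lam3 : ℤ := (k : ℤ) * Nat.choose (n - k - 3) (k - 3)
      - ((k : ℤ) - 3) * Nat.choose (n - k - 2) (k - 3)
    ((k : ℤ) ^ 2 - 3 * k + 2) * lam3
        = (2 * (k : ℤ) ^ 2 - 3 * k - 3) * Nat.choose (n - k - 3) (k - 3) ∧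
      (4 ≤ k → 0 < lam3) ∧ (k = 3 → 0 ≤ lam3) := by
  intro n lam3
  set m := n - k - 3
  have hkk : 3 * k ≤ k ^ 2 := by nlinarith
  have hm_succ : n - k - 2 = m + 1 := by omega
  have hm : (m : ℤ) = (k : ℤ) ^ 2 - 2 * k - 2 := by
    have h : m + 2 * k + 2 = k ^ 2 := by omega
    have hz : (m : ℤ) + 2 * k + 2 = (k : ℤ) ^ 2 := by exact_mod_cast h
    linear_combination hz
  have hr : k - 3 ≤ m := by omega
  have hrz : ((k - 3 : ℕ) : ℤ) = (k : ℤ) - 3 := by push_cast [hk]; ring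
  have hk3 : (3 : ℤ) ≤ k := by exact_mod_cast hk
  have key : ((k : ℤ) ^ 2 - 3 * k + 2) * lam3
      = (2 * (k : ℤ) ^ 2 - 3 * k - 3) * m.choose (k - 3) := by
    have h := Nat.succ_sub_mul_sub_choose_succ (Nat.le_succ_of_le hr) (k : ℤ) ((k : ℤ) - 3)
    rw [hrz, hm] at h
    simp only [lam3, hm_succ]
    linear_combination h
  have hpos : 0 < lam3 := by
    have hc : (0 : ℤ) < (k : ℤ) ^ 2 - 3 * k + 2 := by nlinarith
    have hd : (0 : ℤ) < 2 * (k : ℤ) ^ 2 - 3 * k - 3 := by nlinarith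
    have hC : (0 : ℤ) < m.choose (k - 3) := by exact_mod_cast Nat.choose_pos hr
    exact (mul_pos_iff_of_pos_left hc).mp (key ▸ mul_pos hd hC)
  exact ⟨key, fun _ => hpos, fun _ => hpos.le⟩
end

section
/- For n = k²−k+1 and all j with 4 ≤ j ≤ k, the eigenvalue λ_j = (−1)^j [ C(k−j, k−1−j)·C(n−k+1−j, k−j) − k·C(n−k−j, k−j) ] satisfies |λ_j| ≤ k·C(n−k, k−3). -/
/-- Binomial coefficient with integer arguments, zero for negative lower index. -/
def zchoose (a b : ℤ) : ℤ := if 0 ≤ b then (a.toNat.choose b.toNat : ℤ) else 0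

lemma zchoose_coe (a b : ℕ) : zchoose (a : ℤ) (b : ℤ) = (a.choose b : ℤ) := by
  simp [zchoose]

lemma choose_add_le (n r d : ℕ) : n.choose r ≤ (n + d).choose (r + d) := by
  induction d with
  | zero => simp
  | succ d ih =>
    calc n.choose r ≤ (n+d).choose (r+d) := ih
    _ ≤ (n+d+1).choose (r+d+1) := by
        rw [Nat.choose_succ_succ]
        exact Nat.le_add_right _ _

lemma choose_pred_self (t : ℕ) : (t+1).choose t = t + 1 := by
  have := Nat.choose_symm (n := t+1) (k := 1) (by omega)
  simpa using this.symm

theorem stmt_11 (k j : ℕ) (hj4 : 4 ≤ j) (hjk : j ≤ k) :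
    let n : ℤ := (k : ℤ) ^ 2 - k + 1
    let lam : ℤ := (-1 : ℤ) ^ j *
      (zchoose ((k : ℤ) - j) ((k : ℤ) - 1 - j) * zchoose (n - k + 1 - j) ((k : ℤ) - j)
        - k * zchoose (n - k - j) ((k : ℤ) - j))
    |lam| ≤ (k : ℤ) * zchoose (n - k) ((k : ℤ) - 3) := by
  intro n lam
  obtain ⟨m, rfl⟩ : ∃ m, k = m + 4 := ⟨k - 4, by omega⟩
  set N : ℕ := (m+3)^2 with hN
  have hkN : m + 4 ≤ N := by rw [hN]; nlinarith
  have hn : n - ((m+4 : ℕ):ℤ) = (N : ℤ) := by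
    simp only [n, hN]; push_cast; ring
  have e4 : ((m+4:ℕ):ℤ) - 3 = ((m+1 : ℕ):ℤ) := by push_cast; ring
  simp only [lam]
  rw [show n - ((m+4:ℕ):ℤ) = (N:ℤ) from hn, e4, zchoose_coe]
  rcases eq_or_lt_of_le hjk with he | hlt
  · -- j = k
    subst he
    have h1 : zchoose (((m+4:ℕ):ℤ) - (m+4:ℕ)) (((m+4:ℕ):ℤ) - 1 - (m+4:ℕ)) = 0 := by
      simp only [zchoose, if_neg (show ¬(0:ℤ) ≤ ((m+4:ℕ):ℤ) - 1 - (m+4:ℕ) by push_cast; omega)]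
    have h2 : zchoose ((N:ℤ) - (m+4:ℕ)) (((m+4:ℕ):ℤ) - (m+4:ℕ)) = 1 := by
      rw [show ((m+4:ℕ):ℤ) - (m+4:ℕ) = ((0:ℕ):ℤ) by ring,
        show ((N:ℤ) - ((m+4:ℕ):ℤ)) = ((N - (m+4) : ℕ):ℤ) by omega, zchoose_coe]
      simp
    rw [h1, h2]
    have habs : |(-1 : ℤ)^(m+4) * (0 * zchoose ((N:ℤ)+1-((m+4:ℕ):ℤ)) (((m+4:ℕ):ℤ)-(m+4:ℕ)) - ((m+4:ℕ):ℤ) * 1)| = ((m+4:ℕ):ℤ) := by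
      rw [abs_mul, abs_pow, abs_neg, abs_one, one_pow, one_mul, zero_mul, zero_sub,
        abs_neg, mul_one, abs_of_nonneg (by positivity)]
    rw [habs]
    have hpos : 1 ≤ N.choose (m+1) := Nat.choose_pos (by omega)
    have : ((m+4:ℕ):ℤ) * 1 ≤ ((m+4:ℕ):ℤ) * (N.choose (m+1) : ℤ) := by
      apply mul_le_mul_of_nonneg_left _ (by positivity)
      exact_mod_cast hpos
    simpa using this
  · -- j < k, i.e. j ≤ m+3
    have hjm : j ≤ m + 3 := by omega
    rw [show ((m+4:ℕ):ℤ) - j = ((m+4-j : ℕ):ℤ) by omega,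
        show ((m+4:ℕ):ℤ) - 1 - j = ((m+3-j : ℕ):ℤ) by omega,
        show (N:ℤ) + 1 - j = ((N+1-j : ℕ):ℤ) by omega,
        show (N:ℤ) - (j:ℤ) = ((N-j : ℕ):ℤ) by omega,
        zchoose_coe, zchoose_coe, zchoose_coe]
    have hc1 : (m+4-j).choose (m+3-j) = m+4-j := by
      rw [show m+3-j = (m+4-j) - 1 by omega]
      obtain ⟨t, ht⟩ : ∃ t, m + 4 - j = t + 1 := ⟨m+3-j, by omega⟩
      rw [ht]; simpa using choose_pred_self t
    rw [hc1]
    -- bounds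
    have bA : (m+4-j) * (N+1-j).choose (m+4-j) ≤ (m+4) * N.choose (m+1) := by
      apply Nat.mul_le_mul (by omega)
      calc (N+1-j).choose (m+4-j) ≤ (N+1-j + (j-3)).choose (m+4-j + (j-3)) :=
            choose_add_le _ _ _
        _ = (N-2).choose (m+1) := by congr 1 <;> omega
        _ ≤ N.choose (m+1) := Nat.choose_le_choose _ (by omega)
    have bB : (m+4) * (N-j).choose (m+4-j) ≤ (m+4) * N.choose (m+1) := by
      apply Nat.mul_le_mul_left
      calc (N-j).choose (m+4-j) ≤ (N-j + (j-3)).choose (m+4-j + (j-3)) :=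
            choose_add_le _ _ _
        _ = (N-3).choose (m+1) := by congr 1 <;> omega
        _ ≤ N.choose (m+1) := Nat.choose_le_choose _ (by omega)
    rw [abs_mul, abs_pow, abs_neg, abs_one, one_pow, one_mul, abs_sub_le_iff]
    constructor
    · have : ((m+4-j : ℕ):ℤ) * ((N+1-j).choose (m+4-j) : ℤ) ≤ ((m+4:ℕ):ℤ) * (N.choose (m+1) : ℤ) := by
        exact_mod_cast bA
      have h0 : (0:ℤ) ≤ ((m+4:ℕ):ℤ) * ((N-j).choose (m+4-j) : ℤ) := by positivity
      linarith
    · have : ((m+4:ℕ):ℤ) * ((N-j).choose (m+4-j) : ℤ) ≤ ((m+4:ℕ):ℤ) * (N.choose (m+1) : ℤ) := by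
        exact_mod_cast bB
      have h0 : (0:ℤ) ≤ ((m+4-j : ℕ):ℤ) * ((N+1-j).choose (m+4-j) : ℤ) := by positivity
      linarith
end

section
/- For any vertex-transitive finite graph G on N vertices, ω(G)·α(G) ≤ N, where ω(G) is the clique number and α(G) is the independence number. -/
open Finset

theorem stmt_15 (V : Type*) [Fintype V] (G : SimpleGraph V)
    (htrans : ∀ u v : V, ∃ e : G ≃g G, e u = v)
    (C I : Finset V)
    (hC : ∀ x ∈ C, ∀ y ∈ C, x ≠ y → G.Adj x y)
    (hI : ∀ x ∈ I, ∀ y ∈ I, x ≠ y → ¬ G.Adj x y) :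
    C.card * I.card ≤ Fintype.card V := by
  classical
  rcases isEmpty_or_nonempty V with hV | hV
  · simp [Finset.card_eq_zero.mpr (Finset.eq_empty_of_isEmpty C)]
  obtain ⟨c0⟩ := hV
  set S : Finset (Equiv.Perm V) :=
    univ.filter (fun σ => ∀ a b : V, G.Adj (σ a) (σ b) ↔ G.Adj a b) with hS
  have memS : ∀ σ : Equiv.Perm V, σ ∈ S ↔ ∀ a b : V, G.Adj (σ a) (σ b) ↔ G.Adj a b := by
    intro σ; simp [hS]
  -- transitivity in terms of S
  have htransS : ∀ u v : V, ∃ σ ∈ S, σ u = v := by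
    intro u v
    obtain ⟨e, he⟩ := htrans u v
    exact ⟨e.toEquiv, (memS _).2 (fun a b => e.map_rel_iff), he⟩
  set k := (S.filter (fun σ => σ c0 = c0)).card with hk
  -- every fiber has the same size
  have fiber_eq : ∀ c i : V, (S.filter (fun σ => σ c = i)).card = k := by
    intro c i
    obtain ⟨τ₁, hτ₁S, hτ₁⟩ := htransS c0 c
    obtain ⟨τ₂, hτ₂S, hτ₂⟩ := htransS c0 i
    rw [hk]
    apply Finset.card_bij' (fun σ _ => (τ₁.trans σ).trans τ₂.symm)
      (fun σ _ => (τ₁.symm.trans σ).trans τ₂)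
    · intro σ hσ
      simp only [Finset.mem_filter] at hσ ⊢
      refine ⟨(memS _).2 ?_, ?_⟩
      · intro a b
        simp only [Equiv.trans_apply]
        rw [show ∀ x y : V, G.Adj (τ₂.symm x) (τ₂.symm y) ↔ G.Adj x y from ?_,
          (memS _).1 hσ.1, (memS _).1 hτ₁S]
        intro x y
        conv_rhs => rw [← τ₂.apply_symm_apply x, ← τ₂.apply_symm_apply y]
        exact ((memS _).1 hτ₂S _ _).symm
      · simp only [Equiv.trans_apply]
        rw [hτ₁, hσ.2, ← hτ₂, Equiv.symm_apply_apply]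
    · intro σ hσ
      simp only [Finset.mem_filter] at hσ ⊢
      refine ⟨(memS _).2 ?_, ?_⟩
      · intro a b
        simp only [Equiv.trans_apply]
        rw [(memS _).1 hτ₂S, (memS _).1 hσ.1]
        have h2 := (memS _).1 hτ₁S (τ₁.symm a) (τ₁.symm b)
        rw [Equiv.apply_symm_apply, Equiv.apply_symm_apply] at h2
        exact h2.symm
      · simp only [Equiv.trans_apply]
        rw [← hτ₁, Equiv.symm_apply_apply, hσ.2, hτ₂]
    · intro σ hσ; ext x; simp
    · intro σ hσ; ext x; simp
  have hkpos : 0 < k := by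
    rw [hk]
    apply Finset.card_pos.2
    refine ⟨Equiv.refl V, Finset.mem_filter.2 ⟨(memS _).2 (fun a b => Iff.rfl), rfl⟩⟩
  -- |S| = N * k
  have hScard : S.card = Fintype.card V * k := by
    rw [Finset.card_eq_sum_card_fiberwise (f := fun σ => σ c0) (t := univ)
      (fun x _ => mem_univ _),
      Finset.sum_congr rfl (fun i _ => fiber_eq c0 i), Finset.sum_const,
      Finset.card_univ, smul_eq_mul]
  -- double counting sum
  have key : ∑ σ ∈ S, (C.filter (fun c => σ c ∈ I)).card = C.card * I.card * k := by
    have h1 : ∀ σ : Equiv.Perm V, (C.filter (fun c => σ c ∈ I)).card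
        = ∑ c ∈ C, ∑ i ∈ I, (if σ c = i then 1 else 0) := by
      intro σ
      rw [Finset.card_filter]
      refine Finset.sum_congr rfl (fun c _ => ?_)
      by_cases h : σ c ∈ I <;> simp [Finset.sum_ite_eq I (σ c) (fun _ => 1), h]
    calc ∑ σ ∈ S, (C.filter (fun c => σ c ∈ I)).card
        = ∑ σ ∈ S, ∑ c ∈ C, ∑ i ∈ I, (if σ c = i then 1 else 0) :=
          Finset.sum_congr rfl (fun σ _ => h1 σ)
      _ = ∑ c ∈ C, ∑ i ∈ I, ∑ σ ∈ S, (if σ c = i then 1 else 0) := by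
          rw [Finset.sum_comm]
          exact Finset.sum_congr rfl (fun c _ => Finset.sum_comm)
      _ = ∑ c ∈ C, ∑ i ∈ I, k := by
          refine Finset.sum_congr rfl (fun c _ => Finset.sum_congr rfl (fun i _ => ?_))
          rw [← fiber_eq c i, Finset.card_filter]
      _ = C.card * I.card * k := by simp [mul_assoc]
  -- each summand ≤ 1
  have bound : ∑ σ ∈ S, (C.filter (fun c => σ c ∈ I)).card ≤ S.card := by
    have h1 : ∑ σ ∈ S, (C.filter (fun c => σ c ∈ I)).card ≤ ∑ σ ∈ S, 1 := by
      refine Finset.sum_le_sum (fun σ hσ => ?_)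
      rw [Finset.card_le_one]
      intro a ha b hb
      simp only [Finset.mem_filter] at ha hb
      by_contra hab
      have hadj : G.Adj a b := hC a ha.1 b hb.1 hab
      have : G.Adj (σ a) (σ b) := ((memS _).1 hσ _ _).2 hadj
      exact hI _ ha.2 _ hb.2 (fun h => hab (σ.injective h)) this
    simpa using h1
  rw [key, hScard] at bound
  exact Nat.le_of_mul_le_mul_right bound hkpos
end

section
/- If there exists a projective plane of order k−1 (a family of k²−k+1 lines, each a k-subset of a (k²−k+1)-point set, any two lines meeting in exactly one point), then the lines form a clique of size k²−k+1 in J(k²−k+1, k, 1), and consequently α(J(k²−k+1, k, 1)) ≤ C(k²-k-1, k-2). -/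
/-!
Permutations of the points act transitively on `k`-subsets and preserve intersection sizes.
Double counting the pairs `(σ, l)` with `l` a line and `σ l ∈ F` gives
`|L| |F| |Sym n| / C(n, k)`, while for each `σ` at most one line lands in `F`, since two
would meet in one point. Hence `|L| |F| ≤ C(n, k)`, and `C(n, k) = n C(n - 2, k - 2)`
for `n = k² - k + 1`.
-/

/-- The Johnson graph J(n,k,1). -/
def johnsonGraph (n k : ℕ) : SimpleGraph {s : Finset (Fin n) // s.card = k} :=
  SimpleGraph.fromRel (fun x y => ((x : Finset (Fin n)) ∩ y).card = 1)

open Finset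

namespace MulAction

variable {G X : Type*} [Group G] [MulAction G X] [Fintype G] [DecidableEq X]

theorem card_filter_smul_smul_mem (I : Finset X) (h : G) (x : X) :
    #{g : G | g • h • x ∈ I} = #{g : G | g • x ∈ I} :=
  card_equiv (Equiv.mulRight h) fun g => by simp [mul_smul]

variable [Fintype X]

theorem card_filter_smul_mem_mul_card [IsPretransitive G X] (I : Finset X) (x : X) :
    #{g : G | g • x ∈ I} * Fintype.card X = Fintype.card G * #I := by
  have hconst : ∀ y : X, #{g : G | g • y ∈ I} = #{g : G | g • x ∈ I} := fun y => by
    obtain ⟨h, rfl⟩ := exists_smul_eq G x y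
    exact card_filter_smul_smul_mem I h x
  have hfiber : ∀ g : G, #{y : X | g • y ∈ I} = #I := fun g =>
    card_equiv (MulAction.toPerm g) fun y => by simp
  calc #{g : G | g • x ∈ I} * Fintype.card X
      = ∑ y : X, #{g : G | g • y ∈ I} := by simp [hconst, mul_comm]
    _ = ∑ g : G, #{y : X | g • y ∈ I} := by simp only [card_filter]; exact sum_comm
    _ = Fintype.card G * #I := by simp [hfiber]

/-- The clique–coclique bound for a transitive action. -/
theorem card_mul_card_le_card [IsPretransitive G X] (C I : Finset X)
    (h : ∀ g : G, #{c ∈ C | g • c ∈ I} ≤ 1) : #C * #I ≤ Fintype.card X := by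
  refine le_of_mul_le_mul_left ?_ (Fintype.card_pos (α := G))
  calc Fintype.card G * (#C * #I)
      = ∑ c ∈ C, #{g : G | g • c ∈ I} * Fintype.card X := by
        simp [card_filter_smul_mem_mul_card]; ring
    _ = (∑ g : G, #{c ∈ C | g • c ∈ I}) * Fintype.card X := by
        rw [← sum_mul]; simp only [card_filter]; rw [sum_comm]
    _ ≤ Fintype.card G * Fintype.card X := by
        gcongr
        simpa using sum_le_sum fun g (_ : g ∈ univ) => h g

end MulAction

open scoped Pointwise in
theorem card_mul_card_le_choose_of_card_inter {α : Type*} [Fintype α] [DecidableEq α]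
    {k t : ℕ} {L F : Finset (Finset α)} (hL : ∀ l ∈ L, #l = k) (hF : ∀ A ∈ F, #A = k)
    (hLt : ∀ l₁ ∈ L, ∀ l₂ ∈ L, l₁ ≠ l₂ → #(l₁ ∩ l₂) = t)
    (hFt : ∀ A ∈ F, ∀ B ∈ F, A ≠ B → #(A ∩ B) ≠ t) :
    #L * #F ≤ (Fintype.card α).choose k := by
  classical
  have : MulAction.IsPretransitive (Equiv.Perm α) (Set.powersetCard α k) :=
    Set.powersetCard.isPretransitive
  have hsub : ∀ {S : Finset (Finset α)}, (∀ s ∈ S, #s = k) →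
      #(S.subtype (· ∈ Set.powersetCard α k)) = #S := fun hS => by
    rw [card_subtype, filter_true_of_mem fun s hs => Set.powersetCard.mem_iff.mpr (hS s hs)]
  have hbound := MulAction.card_mul_card_le_card (G := Equiv.Perm α)
    (L.subtype (· ∈ Set.powersetCard α k)) (F.subtype (· ∈ Set.powersetCard α k)) fun σ => by
      refine card_le_one.mpr fun c₁ hc₁ c₂ hc₂ => by_contra fun hne => ?_
      simp only [mem_filter, mem_subtype, Set.powersetCard.coe_smul] at hc₁ hc₂
      replace hne := Subtype.coe_injective.ne hne
      refine hFt _ hc₁.2 _ hc₂.2 ((MulAction.injective σ).ne hne) ?_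
      rw [← smul_finset_inter, card_smul_finset]
      exact hLt _ hc₁.1 _ hc₂.1 hne
  rwa [hsub hL, hsub hF, ← Nat.card_eq_fintype_card, Set.powersetCard.card,
    Nat.card_eq_fintype_card] at hbound

theorem Nat.choose_add_two_mul (n k : ℕ) :
    (n + 2).choose (k + 2) * ((k + 2) * (k + 1)) = (n + 2) * (n + 1) * n.choose k := by
  rw [← mul_assoc, ← Nat.add_one_mul_choose_eq, mul_assoc, ← Nat.add_one_mul_choose_eq]
  ring

theorem choose_sq_sub_add_one {k : ℕ} (hk : 2 ≤ k) :
    (k ^ 2 - k + 1).choose k = (k ^ 2 - k + 1) * (k ^ 2 - k - 1).choose (k - 2) := by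
  obtain ⟨j, rfl⟩ : ∃ j, k = j + 2 := ⟨k - 2, by omega⟩
  have hsq : (j + 2) ^ 2 = j * j + 4 * j + 4 := by ring
  have hprod : (j + 2) * (j + 1) = j * j + 3 * j + 2 := by ring
  set n := (j + 2) ^ 2 - (j + 2) - 1
  have hn : (j + 2) ^ 2 - (j + 2) + 1 = n + 2 := by omega
  have hn1 : n + 1 = (j + 2) * (j + 1) := by omega
  rw [hn, Nat.add_sub_cancel]
  refine Nat.eq_of_mul_eq_mul_right (by positivity : 0 < (j + 2) * (j + 1)) ?_
  rw [Nat.choose_add_two_mul, hn1]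
  ring

theorem johnsonGraph_adj {n k : ℕ} {a b : {s : Finset (Fin n) // s.card = k}} :
    (johnsonGraph n k).Adj a b ↔ a ≠ b ∧ #((a : Finset (Fin n)) ∩ b) = 1 := by
  simp [johnsonGraph, inter_comm (b : Finset (Fin n))]

theorem stmt_17 (k : ℕ) (hk : 2 ≤ k)
    (L : Finset (Finset (Fin (k ^ 2 - k + 1))))
    (hL : L.card = k ^ 2 - k + 1)
    (hlines : ∀ l ∈ L, l.card = k)
    (hmeet : ∀ l₁ ∈ L, ∀ l₂ ∈ L, l₁ ≠ l₂ → (l₁ ∩ l₂).card = 1) :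
    (∃ C : Finset {s : Finset (Fin (k ^ 2 - k + 1)) // s.card = k},
        C.card = k ^ 2 - k + 1 ∧
        (∀ a ∈ C, (a : Finset (Fin (k ^ 2 - k + 1))) ∈ L) ∧
        ∀ a ∈ C, ∀ b ∈ C, a ≠ b → (johnsonGraph (k ^ 2 - k + 1) k).Adj a b) ∧
    ∀ F : Finset (Finset (Fin (k ^ 2 - k + 1))),
      (∀ s ∈ F, s.card = k) →
      (∀ A ∈ F, ∀ B ∈ F, (A ∩ B).card ≠ 1) →
      F.card ≤ Nat.choose (k ^ 2 - k - 1) (k - 2) := by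
  refine ⟨⟨L.subtype (#· = k), ?_, fun a ha => mem_subtype.mp ha, ?_⟩, fun F hF hFint => ?_⟩
  · rw [card_subtype, filter_true_of_mem hlines, hL]
  · intro a ha b hb hab
    exact johnsonGraph_adj.mpr ⟨hab,
      hmeet _ (mem_subtype.mp ha) _ (mem_subtype.mp hb) (Subtype.coe_injective.ne hab)⟩
  · have hbound := card_mul_card_le_choose_of_card_inter hlines hF hmeet
      fun A hA B hB _ => hFint A hA B hB
    rw [hL, Fintype.card_fin, choose_sq_sub_add_one hk] at hbound
    exact Nat.le_of_mul_le_mul_left hbound (Nat.succ_pos _)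
end
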